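/- arXiv:1702.00888 — 2 statements merged into one kernel-verified Lean document; each statement's English description precedes it below -/
import Mathlib

section
/- For a single pair of 2^K units assigned by a uniformly random bijection to the 2^K treatments, the covariance matrix of τ̂_{j·} equals 2^{-2(K-1)} Σ_{l=1}^{2^K} λ_l' λ_l S_j^2(z_l) − (2^K(2^K−1))^{-1} Σ_{i∈ψ_j} (τ_i − τ_{j·})(τ_i − τ_{j·})', where λ_l is the l-th row of H_K and S_j^2(z_l) = (2^K−1)^{-1} Σ_{i∈ψ_j} (Y_i(z_l) − Ȳ_{j·}(z_l))^2. -/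
open Matrix Finset


section aux
variable {β : Type*} [Fintype β] [DecidableEq β]

lemma sum_perm_symm {M : Type*} [AddCommMonoid M] (F : Equiv.Perm β → M) :
    ∑ π : Equiv.Perm β, F π.symm = ∑ π : Equiv.Perm β, F π :=
  Fintype.sum_equiv (Equiv.inv (Equiv.Perm β)) _ _ fun π => rfl

lemma sum_perm_apply (f : β → ℝ) (l : β) :
    (Fintype.card β : ℝ) * ∑ π : Equiv.Perm β, f (π l) =
      (Fintype.card (Equiv.Perm β) : ℝ) * ∑ i, f i := by
  have h1 : ∀ m : β, ∑ π : Equiv.Perm β, f (π l) = ∑ π : Equiv.Perm β, f (π m) := fun m =>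
    Fintype.sum_equiv (Equiv.mulRight (Equiv.swap l m)) _ _ fun π => by
      simp [Equiv.Perm.mul_apply]
  calc (Fintype.card β : ℝ) * ∑ π : Equiv.Perm β, f (π l)
      = ∑ m : β, ∑ π : Equiv.Perm β, f (π m) := by
        rw [Finset.sum_congr rfl fun m _ => (h1 m).symm, Finset.sum_const, Finset.card_univ,
          nsmul_eq_mul]
    _ = ∑ π : Equiv.Perm β, ∑ m : β, f (π m) := Finset.sum_comm
    _ = ∑ π : Equiv.Perm β, ∑ i, f i :=
        Finset.sum_congr rfl fun π _ => Equiv.sum_comp π f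
    _ = _ := by rw [Finset.sum_const, Finset.card_univ, nsmul_eq_mul]

lemma sum_perm_pair (g : β → β → ℝ) {l m : β} (hlm : l ≠ m) :
    (Fintype.card β : ℝ) * ((Fintype.card β : ℝ) - 1) *
        ∑ π : Equiv.Perm β, g (π l) (π m) =
      (Fintype.card (Equiv.Perm β) : ℝ) * ∑ p ∈ Finset.univ.offDiag, g p.1 p.2 := by
  have h1 : ∀ p : β × β, p.1 ≠ p.2 →
      ∑ π : Equiv.Perm β, g (π l) (π m) = ∑ π : Equiv.Perm β, g (π p.1) (π p.2) := by
    intro p hp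
    set σ : Equiv.Perm β := Equiv.swap (Equiv.swap p.1 l p.2) m * Equiv.swap p.1 l with hσ
    have h' : Equiv.swap p.1 l p.2 ≠ l := by
      intro h
      exact hp (Equiv.injective _ (h.trans (Equiv.swap_apply_left p.1 l).symm)).symm
    have hσ1 : σ p.1 = l := by
      simp [hσ, Equiv.Perm.mul_apply, Equiv.swap_apply_left,
        Equiv.swap_apply_of_ne_of_ne (Ne.symm h') hlm]
    have hσ2 : σ p.2 = m := by
      simp [hσ, Equiv.Perm.mul_apply, Equiv.swap_apply_left]
    exact Fintype.sum_equiv (Equiv.mulRight σ) _ _ fun π => by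
      simp [Equiv.Perm.mul_apply, hσ1, hσ2]
  have hcardpos : 0 < Fintype.card β := Fintype.card_pos_iff.mpr ⟨l⟩
  have hπ : ∀ π : Equiv.Perm β, ∑ p ∈ Finset.univ.offDiag, g (π p.1) (π p.2)
      = ∑ p ∈ Finset.univ.offDiag, g p.1 p.2 := by
    intro π
    refine Finset.sum_nbij' (fun p => (π p.1, π p.2)) (fun p => (π.symm p.1, π.symm p.2))
      ?_ ?_ ?_ ?_ ?_
    · intro p hp
      simp only [Finset.mem_offDiag, Finset.mem_univ, true_and] at hp ⊢
      exact fun h => hp (π.injective h)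
    · intro p hp
      simp only [Finset.mem_offDiag, Finset.mem_univ, true_and] at hp ⊢
      exact fun h => hp (π.symm.injective h)
    · intro p _; simp
    · intro p _; simp
    · intro p _; rfl
  have h2 : ∑ p ∈ Finset.univ.offDiag, ∑ π : Equiv.Perm β, g (π p.1) (π p.2)
      = ((Finset.univ : Finset β).offDiag.card : ℝ) * ∑ π : Equiv.Perm β, g (π l) (π m) := by
    rw [Finset.sum_congr rfl fun p hp => (h1 p (Finset.mem_offDiag.mp hp).2.2).symm,
      Finset.sum_const, nsmul_eq_mul]
  have h3 : ∑ p ∈ Finset.univ.offDiag, ∑ π : Equiv.Perm β, g (π p.1) (π p.2)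
      = (Fintype.card (Equiv.Perm β) : ℝ) * ∑ p ∈ Finset.univ.offDiag, g p.1 p.2 := by
    rw [Finset.sum_comm, Finset.sum_congr rfl fun π _ => hπ π, Finset.sum_const,
      Finset.card_univ, nsmul_eq_mul]
  have hcard : (((Finset.univ : Finset β).offDiag.card : ℕ) : ℝ)
      = (Fintype.card β : ℝ) * ((Fintype.card β : ℝ) - 1) := by
    rw [Finset.offDiag_card, Finset.card_univ]
    have hle : Fintype.card β ≤ Fintype.card β * Fintype.card β :=
      Nat.le_mul_of_pos_left _ hcardpos
    push_cast [Nat.cast_sub hle]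
    ring
  rw [← hcard, ← h2, h3]

lemma cov_expand {ι : Type*} [Fintype ι] (f g : ι → ℝ) (hc : (Fintype.card ι : ℝ) ≠ 0) :
    (Fintype.card ι : ℝ)⁻¹ * ∑ x, (f x - (Fintype.card ι : ℝ)⁻¹ * ∑ y, f y) *
        (g x - (Fintype.card ι : ℝ)⁻¹ * ∑ y, g y) =
      (Fintype.card ι : ℝ)⁻¹ * ∑ x, f x * g x -
        ((Fintype.card ι : ℝ)⁻¹ * ∑ y, f y) * ((Fintype.card ι : ℝ)⁻¹ * ∑ y, g y) := by
  have key : ∑ x, (f x - (Fintype.card ι : ℝ)⁻¹ * ∑ y, f y) *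
        (g x - (Fintype.card ι : ℝ)⁻¹ * ∑ y, g y)
      = ∑ x, f x * g x
        - ((Fintype.card ι : ℝ)⁻¹ * ∑ y, g y) * ∑ y, f y
        - ((Fintype.card ι : ℝ)⁻¹ * ∑ y, f y) * ∑ y, g y
        + (Fintype.card ι : ℝ) * (((Fintype.card ι : ℝ)⁻¹ * ∑ y, f y) *
            ((Fintype.card ι : ℝ)⁻¹ * ∑ y, g y)) := by
    have h : ∀ x, (f x - (Fintype.card ι : ℝ)⁻¹ * ∑ y, f y) *
        (g x - (Fintype.card ι : ℝ)⁻¹ * ∑ y, g y)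
        = f x * g x - ((Fintype.card ι : ℝ)⁻¹ * ∑ y, g y) * f x
          - ((Fintype.card ι : ℝ)⁻¹ * ∑ y, f y) * g x
          + ((Fintype.card ι : ℝ)⁻¹ * ∑ y, f y) * ((Fintype.card ι : ℝ)⁻¹ * ∑ y, g y) :=
      fun x => by ring
    simp only [h, Finset.sum_add_distrib, Finset.sum_sub_distrib, ← Finset.mul_sum,
      Finset.sum_const, Finset.card_univ, nsmul_eq_mul]
    ring
  rw [key]
  field_simp
  ring

lemma cancel_aux {N : ℝ} (hN : N ≠ 0) (x s : ℝ) : N⁻¹ * (x * (N * s)) = x * s := by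
  have h : x * (N * s) = N * (x * s) := by ring
  rw [h, inv_mul_cancel_left₀ hN]

lemma cancel_aux2 {N : ℝ} (hN : N ≠ 0) (A x s : ℝ) :
    N⁻¹ * A * (x * (N * s)) = A * (x * s) := by
  have h : N⁻¹ * A * (x * (N * s)) = N⁻¹ * (N * (A * (x * s))) := by ring
  rw [h, inv_mul_cancel_left₀ hN]

lemma final_combine {n : Type*} [Fintype n] (c q : ℝ) (A B C D : n → n → ℝ)
    (h : ∀ l m, A l m - B l m = C l m - q * D l m) :
    c * (∑ l, ∑ m, A l m) - c * (∑ l, ∑ m, B l m)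
      = c * (∑ l, ∑ m, C l m) - q * (c * ∑ l, ∑ m, D l m) := by
  have h2 : (∑ l, ∑ m, A l m) - (∑ l, ∑ m, B l m)
      = (∑ l, ∑ m, C l m) - q * (∑ l, ∑ m, D l m) := by
    rw [← Finset.sum_sub_distrib, Finset.mul_sum, ← Finset.sum_sub_distrib]
    refine Finset.sum_congr rfl fun l _ => ?_
    rw [← Finset.sum_sub_distrib, Finset.mul_sum, ← Finset.sum_sub_distrib]
    exact Finset.sum_congr rfl fun m _ => h l m
  linear_combination c * h2

lemma sum_comm3 {α β γ : Type*} [Fintype α] [Fintype β] [Fintype γ]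
    (F : α → β → γ → ℝ) :
    ∑ a, ∑ b, ∑ c, F a b c = ∑ b, ∑ c, ∑ a, F a b c := by
  rw [Finset.sum_comm]
  exact Finset.sum_congr rfl fun b _ => Finset.sum_comm

end aux


/-- The basic contrast column `h_k` (for factor `l+1`): its `i`-th entry is `+1`
or `-1` according to the corresponding binary digit of `i`, following the block
construction (first `2^(K-k)` entries `-1`, next `2^(K-k)` entries `+1`, repeated). -/
noncomputable def hcol (K : ℕ) (l : Fin K) (i : Fin (2 ^ K)) : ℝ :=
  if Nat.testBit i.val (K - 1 - l.val) then 1 else -1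

/-- The model matrix `H_K` of a `2^K` factorial design, with columns indexed by
subsets `σ ⊆ {1,…,K}`: the column for `σ` is the entrywise product `∏_{l ∈ σ} h_l`,
with the empty set giving the all-ones column `h_0`. -/
noncomputable def Hmat (K : ℕ) : Matrix (Fin (2 ^ K)) (Finset (Fin K)) ℝ :=
  Matrix.of fun i σ => ∏ l ∈ σ, hcol K l i

/-- Within-pair estimator under assignment `π`: `τ̂ⱼ. = 2^{-(K-1)} H_K' Yʲᵒᵇˢ`,
where the observed outcome for treatment `l` is `Y (π.symm l) l`. -/
noncomputable def tauhatPair (K : ℕ) (Y : Fin (2 ^ K) → Fin (2 ^ K) → ℝ)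
    (π : Equiv.Perm (Fin (2 ^ K))) : Finset (Fin K) → ℝ :=
  ((2 : ℝ) ^ (K - 1))⁻¹ • (Hmat K)ᵀ.mulVec (fun l => Y (π.symm l) l)

/-- Individual factorial effect `τᵢ = 2^{-(K-1)} H_K' Yᵢ`. -/
noncomputable def tauUnit (K : ℕ) (Y : Fin (2 ^ K) → Fin (2 ^ K) → ℝ)
    (i : Fin (2 ^ K)) : Finset (Fin K) → ℝ :=
  ((2 : ℝ) ^ (K - 1))⁻¹ • (Hmat K)ᵀ.mulVec (Y i)

/-- Pair-level factorial effect `τⱼ.`, the average of the `τᵢ`. -/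
noncomputable def tauPairAvg (K : ℕ) (Y : Fin (2 ^ K) → Fin (2 ^ K) → ℝ) :
    Finset (Fin K) → ℝ :=
  ((2 : ℝ) ^ K)⁻¹ • ∑ i, tauUnit K Y i

/-- Mean (over the uniformly random bijection) of a component of `τ̂ⱼ.`. -/
noncomputable def tauhatPairMean (K : ℕ) (Y : Fin (2 ^ K) → Fin (2 ^ K) → ℝ)
    (a : Finset (Fin K)) : ℝ :=
  (Fintype.card (Equiv.Perm (Fin (2 ^ K))) : ℝ)⁻¹ * ∑ π, tauhatPair K Y π a

/-- For a single pair of `2^K` units assigned by a uniformly random bijection to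
the `2^K` treatments, the covariance matrix of `τ̂ⱼ.` equals
`2^{-2(K-1)} ∑ₗ λₗ'λₗ Sⱼ²(zₗ) − (2^K(2^K−1))⁻¹ ∑ᵢ (τᵢ−τⱼ.)(τᵢ−τⱼ.)'`,
where `λₗ` is the `l`-th row of `H_K` and
`Sⱼ²(zₗ) = (2^K−1)⁻¹ ∑ᵢ (Yᵢ(zₗ) − Ȳⱼ.(zₗ))²`. -/
theorem single_pair_covariance (K : ℕ) (hK : 0 < K)
    (Y : Fin (2 ^ K) → Fin (2 ^ K) → ℝ) :
    (Matrix.of fun a b : Finset (Fin K) =>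
        (Fintype.card (Equiv.Perm (Fin (2 ^ K))) : ℝ)⁻¹ *
          ∑ π, (tauhatPair K Y π a - tauhatPairMean K Y a) *
               (tauhatPair K Y π b - tauhatPairMean K Y b))
      = ((2 : ℝ) ^ (2 * (K - 1)))⁻¹ •
          (∑ l : Fin (2 ^ K),
            (((2 : ℝ) ^ K - 1)⁻¹ *
                ∑ i, (Y i l - ((2 : ℝ) ^ K)⁻¹ * ∑ i', Y i' l) ^ 2) •
              vecMulVec (fun σ => Hmat K l σ) (fun σ => Hmat K l σ))
        - ((2 : ℝ) ^ K * ((2 : ℝ) ^ K - 1))⁻¹ •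
            ∑ i, vecMulVec (tauUnit K Y i - tauPairAvg K Y)
                           (tauUnit K Y i - tauPairAvg K Y) := by
  classical
  have hcardFin : (Fintype.card (Fin (2 ^ K)) : ℝ) = (2 : ℝ) ^ K := by
    rw [Fintype.card_fin]; push_cast; ring
  have h2le : (2 : ℝ) ≤ (2 : ℝ) ^ K := by
    calc (2 : ℝ) = 2 ^ 1 := (pow_one 2).symm
      _ ≤ 2 ^ K := by exact pow_le_pow_right₀ (by norm_num) hK
  have hn0 : ((2 : ℝ) ^ K) ≠ 0 := by positivity
  have hn1 : ((2 : ℝ) ^ K - 1) ≠ 0 := by nlinarith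
  have hN0 : (Fintype.card (Equiv.Perm (Fin (2 ^ K))) : ℝ) ≠ 0 :=
    Nat.cast_ne_zero.mpr Fintype.card_ne_zero
  have hc2 : ((2 : ℝ) ^ (2 * (K - 1)))⁻¹ = (((2 : ℝ) ^ (K - 1))⁻¹) ^ 2 := by
    rw [mul_comm, pow_mul, inv_pow]
  set c : ℝ := ((2 : ℝ) ^ (K - 1))⁻¹ with hcdef
  -- expansions of the definitions
  have htau : ∀ (π : Equiv.Perm (Fin (2 ^ K))) (a : Finset (Fin K)),
      tauhatPair K Y π a = c * ∑ l, Hmat K l a * Y (π.symm l) l := by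
    intro π a
    simp [tauhatPair, Matrix.mulVec, dotProduct, Matrix.transpose_apply,
      Pi.smul_apply, smul_eq_mul, hcdef]
  have htu : ∀ (i : Fin (2 ^ K)) (a : Finset (Fin K)),
      tauUnit K Y i a = c * ∑ l, Hmat K l a * Y i l := by
    intro i a
    simp [tauUnit, Matrix.mulVec, dotProduct, Matrix.transpose_apply,
      Pi.smul_apply, smul_eq_mul, hcdef]
  have hpa : ∀ a : Finset (Fin K), tauPairAvg K Y a
      = c * ∑ l, Hmat K l a * (((2 : ℝ) ^ K)⁻¹ * ∑ i, Y i l) := by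
    intro a
    simp only [tauPairAvg, Pi.smul_apply, smul_eq_mul, Finset.sum_apply]
    rw [Finset.sum_congr rfl fun i _ => htu i a]
    simp only [Finset.mul_sum]
    rw [Finset.sum_comm]
    exact Finset.sum_congr rfl fun l _ => Finset.sum_congr rfl fun i _ => by ring
  -- mean of the estimator
  have hmeanEq : ∀ a : Finset (Fin K),
      (Fintype.card (Equiv.Perm (Fin (2 ^ K))) : ℝ)⁻¹ * ∑ π, tauhatPair K Y π a
      = c * ∑ l, Hmat K l a * (((2 : ℝ) ^ K)⁻¹ * ∑ i, Y i l) := by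
    intro a
    rw [Finset.sum_congr rfl fun π _ => htau π a]
    simp only [Finset.mul_sum]
    rw [Finset.sum_comm]
    refine Finset.sum_congr rfl fun l _ => ?_
    have e1 : ∑ π : Equiv.Perm (Fin (2 ^ K)), Y (π.symm l) l = ∑ π : Equiv.Perm (Fin (2 ^ K)), Y (π l) l :=
      sum_perm_symm (fun ρ => Y (ρ l) l)
    have e2 := sum_perm_apply (fun i : Fin (2 ^ K) => Y i l) l
    rw [hcardFin] at e2
    have e4 : ∑ π : Equiv.Perm (Fin (2 ^ K)), Y (π l) l
        = ((2 : ℝ) ^ K)⁻¹ * ((Fintype.card (Equiv.Perm (Fin (2 ^ K))) : ℝ) * ∑ i, Y i l) := by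
      rw [← e2, inv_mul_cancel_left₀ hn0]
    have e5 : ∑ π : Equiv.Perm (Fin (2 ^ K)),
        (Fintype.card (Equiv.Perm (Fin (2 ^ K))) : ℝ)⁻¹ * (c * (Hmat K l a * Y (π.symm l) l))
        = (Fintype.card (Equiv.Perm (Fin (2 ^ K))) : ℝ)⁻¹ * (c * Hmat K l a)
            * ∑ π : Equiv.Perm (Fin (2 ^ K)), Y (π.symm l) l := by
      rw [Finset.mul_sum]
      exact Finset.sum_congr rfl fun π _ => by ring
    rw [e5, e1, e4, cancel_aux2 hN0, mul_assoc]
    simp only [Finset.mul_sum]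
  -- diagonal second moment
  have hdiag : ∀ l : Fin (2 ^ K),
      (Fintype.card (Equiv.Perm (Fin (2 ^ K))) : ℝ)⁻¹
        * ∑ π : Equiv.Perm (Fin (2 ^ K)), Y (π.symm l) l * Y (π.symm l) l
      = ((2 : ℝ) ^ K)⁻¹ * ∑ i, Y i l * Y i l := by
    intro l
    have e1 : ∑ π : Equiv.Perm (Fin (2 ^ K)), Y (π.symm l) l * Y (π.symm l) l
        = ∑ π : Equiv.Perm (Fin (2 ^ K)), Y (π l) l * Y (π l) l := sum_perm_symm (fun ρ => Y (ρ l) l * Y (ρ l) l)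
    have e2 := sum_perm_apply (fun i : Fin (2 ^ K) => Y i l * Y i l) l
    rw [hcardFin] at e2
    have e4 : ∑ π : Equiv.Perm (Fin (2 ^ K)), Y (π l) l * Y (π l) l
        = ((2 : ℝ) ^ K)⁻¹ * ((Fintype.card (Equiv.Perm (Fin (2 ^ K))) : ℝ)
            * ∑ i, Y i l * Y i l) := by
      rw [← e2, inv_mul_cancel_left₀ hn0]
    rw [e1, e4, cancel_aux hN0]
  -- off-diagonal second moment
  have hoff : ∀ l m : Fin (2 ^ K), l ≠ m →
      (Fintype.card (Equiv.Perm (Fin (2 ^ K))) : ℝ)⁻¹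
        * ∑ π : Equiv.Perm (Fin (2 ^ K)), Y (π.symm l) l * Y (π.symm m) m
      = ((2 : ℝ) ^ K * ((2 : ℝ) ^ K - 1))⁻¹
          * ∑ p ∈ Finset.univ.offDiag, Y p.1 l * Y p.2 m := by
    intro l m hlm
    have e1 : ∑ π : Equiv.Perm (Fin (2 ^ K)), Y (π.symm l) l * Y (π.symm m) m
        = ∑ π : Equiv.Perm (Fin (2 ^ K)), Y (π l) l * Y (π m) m := sum_perm_symm (fun ρ => Y (ρ l) l * Y (ρ m) m)
    have e2 := sum_perm_pair (fun i i' : Fin (2 ^ K) => Y i l * Y i' m) hlm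
    rw [hcardFin] at e2
    have hq0 : (2 : ℝ) ^ K * ((2 : ℝ) ^ K - 1) ≠ 0 := mul_ne_zero hn0 hn1
    have e4 : ∑ π : Equiv.Perm (Fin (2 ^ K)), Y (π l) l * Y (π m) m
        = ((2 : ℝ) ^ K * ((2 : ℝ) ^ K - 1))⁻¹
            * ((Fintype.card (Equiv.Perm (Fin (2 ^ K))) : ℝ)
              * ∑ p ∈ Finset.univ.offDiag, Y p.1 l * Y p.2 m) := by
      rw [← e2, inv_mul_cancel_left₀ hq0]
    rw [e1, e4]
    field_simp
  -- algebraic expansion of centered cross sums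
  have hexp : ∀ l m : Fin (2 ^ K),
      ∑ i, (Y i l - ((2 : ℝ) ^ K)⁻¹ * ∑ i', Y i' l) * (Y i m - ((2 : ℝ) ^ K)⁻¹ * ∑ i', Y i' m)
      = (∑ i, Y i l * Y i m)
        - ((2 : ℝ) ^ K)⁻¹ * ((∑ i, Y i l) * (∑ i, Y i m)) := by
    intro l m
    have h : ∀ i, (Y i l - ((2 : ℝ) ^ K)⁻¹ * ∑ i', Y i' l)
          * (Y i m - ((2 : ℝ) ^ K)⁻¹ * ∑ i', Y i' m)
        = Y i l * Y i m - (((2 : ℝ) ^ K)⁻¹ * ∑ i', Y i' m) * Y i l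
          - (((2 : ℝ) ^ K)⁻¹ * ∑ i', Y i' l) * Y i m
          + (((2 : ℝ) ^ K)⁻¹ * ∑ i', Y i' l) * (((2 : ℝ) ^ K)⁻¹ * ∑ i', Y i' m) :=
      fun i => by ring
    simp only [h, Finset.sum_add_distrib, Finset.sum_sub_distrib, ← Finset.mul_sum,
      Finset.sum_const, Finset.card_univ, hcardFin, nsmul_eq_mul]
    field_simp
    ring
  -- sum over off-diagonal pairs
  have hoffsum : ∀ l m : Fin (2 ^ K),
      ∑ p ∈ (Finset.univ : Finset (Fin (2 ^ K))).offDiag, Y p.1 l * Y p.2 m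
      = (∑ i, Y i l) * (∑ i, Y i m) - ∑ i, Y i l * Y i m := by
    intro l m
    have h1 : ∑ p ∈ (Finset.univ : Finset (Fin (2 ^ K))) ×ˢ Finset.univ, Y p.1 l * Y p.2 m
        = (∑ i, Y i l) * (∑ i, Y i m) := by
      rw [Finset.sum_product, Finset.sum_mul_sum]
    have h3 : ∑ p ∈ (Finset.univ : Finset (Fin (2 ^ K))) ×ˢ Finset.univ, Y p.1 l * Y p.2 m
        = (∑ p ∈ (Finset.univ : Finset (Fin (2 ^ K))).diag, Y p.1 l * Y p.2 m)
          + ∑ p ∈ (Finset.univ : Finset (Fin (2 ^ K))).offDiag, Y p.1 l * Y p.2 m := by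
      rw [← Finset.diag_union_offDiag, Finset.sum_union (Finset.disjoint_diag_offDiag _)]
    have h4 : ∑ p ∈ (Finset.univ : Finset (Fin (2 ^ K))).diag, Y p.1 l * Y p.2 m
        = ∑ i, Y i l * Y i m := by
      rw [Finset.sum_diag]
    rw [h1, h4] at h3
    linarith
  ext a b
  simp only [Matrix.of_apply, Matrix.sub_apply, Matrix.smul_apply, Matrix.sum_apply,
    Matrix.vecMulVec_apply, smul_eq_mul, Pi.sub_apply]
  -- covariance expansion
  simp only [tauhatPairMean]
  rw [cov_expand _ _ hN0]
  -- second moment expansion of the estimator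
  have hprod : ∀ π : Equiv.Perm (Fin (2 ^ K)),
      tauhatPair K Y π a * tauhatPair K Y π b
      = c ^ 2 * ∑ l, ∑ m, (Hmat K l a * Hmat K m b)
          * (Y (π.symm l) l * Y (π.symm m) m) := by
    intro π
    rw [htau π a, htau π b, mul_mul_mul_comm, Finset.sum_mul_sum, ← pow_two]
    congr 1
    exact Finset.sum_congr rfl fun l _ => Finset.sum_congr rfl fun m _ => by ring
  have hsecond : (Fintype.card (Equiv.Perm (Fin (2 ^ K))) : ℝ)⁻¹
        * ∑ π, tauhatPair K Y π a * tauhatPair K Y π b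
      = c ^ 2 * ∑ l, ∑ m, (Hmat K l a * Hmat K m b)
          * ((Fintype.card (Equiv.Perm (Fin (2 ^ K))) : ℝ)⁻¹
            * ∑ π : Equiv.Perm (Fin (2 ^ K)), Y (π.symm l) l * Y (π.symm m) m) := by
    rw [Finset.sum_congr rfl fun π _ => hprod π]
    simp only [Finset.mul_sum]
    rw [sum_comm3]
    exact Finset.sum_congr rfl fun l _ => Finset.sum_congr rfl fun m _ =>
      Finset.sum_congr rfl fun π _ => by ring
  -- centered individual effects
  have hT : ∀ (i : Fin (2 ^ K)) (a : Finset (Fin K)),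
      tauUnit K Y i a - tauPairAvg K Y a
      = c * ∑ l, Hmat K l a * (Y i l - ((2 : ℝ) ^ K)⁻¹ * ∑ i', Y i' l) := by
    intro i a
    rw [htu i a, hpa a, ← mul_sub, ← Finset.sum_sub_distrib]
    congr 1
    exact Finset.sum_congr rfl fun l _ => by ring
  have hTsum : ∑ i, (tauUnit K Y i a - tauPairAvg K Y a) * (tauUnit K Y i b - tauPairAvg K Y b)
      = c ^ 2 * ∑ l, ∑ m, (Hmat K l a * Hmat K m b)
          * ∑ i, (Y i l - ((2 : ℝ) ^ K)⁻¹ * ∑ i', Y i' l)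
              * (Y i m - ((2 : ℝ) ^ K)⁻¹ * ∑ i', Y i' m) := by
    have h1 : ∀ i : Fin (2 ^ K),
        (tauUnit K Y i a - tauPairAvg K Y a) * (tauUnit K Y i b - tauPairAvg K Y b)
        = c ^ 2 * ∑ l, ∑ m, (Hmat K l a * Hmat K m b)
            * ((Y i l - ((2 : ℝ) ^ K)⁻¹ * ∑ i', Y i' l)
              * (Y i m - ((2 : ℝ) ^ K)⁻¹ * ∑ i', Y i' m)) := by
      intro i
      rw [hT i a, hT i b, mul_mul_mul_comm, Finset.sum_mul_sum, ← pow_two]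
      congr 1
      exact Finset.sum_congr rfl fun l _ => Finset.sum_congr rfl fun m _ => by ring
    rw [Finset.sum_congr rfl fun i _ => h1 i]
    simp only [Finset.mul_sum]
    rw [sum_comm3]
  -- first RHS term as a double sum
  have hS : ∑ l, (((2 : ℝ) ^ K - 1)⁻¹
        * ∑ i, (Y i l - ((2 : ℝ) ^ K)⁻¹ * ∑ i', Y i' l) ^ 2) * (Hmat K l a * Hmat K l b)
      = ∑ l, ∑ m, (Hmat K l a * Hmat K m b)
          * (if l = m then ((2 : ℝ) ^ K - 1)⁻¹
              * ∑ i, (Y i l - ((2 : ℝ) ^ K)⁻¹ * ∑ i', Y i' l) ^ 2 else 0) := by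
    refine Finset.sum_congr rfl fun l _ => ?_
    simp only [mul_ite, mul_zero]
    rw [Finset.sum_ite_eq]
    simp only [Finset.mem_univ, if_true]
    ring
  -- mean product as a double sum
  have hmp : (c * ∑ l, Hmat K l a * (((2 : ℝ) ^ K)⁻¹ * ∑ i, Y i l))
        * (c * ∑ m, Hmat K m b * (((2 : ℝ) ^ K)⁻¹ * ∑ i, Y i m))
      = c ^ 2 * ∑ l, ∑ m, (Hmat K l a * Hmat K m b)
          * ((((2 : ℝ) ^ K)⁻¹ * ∑ i, Y i l) * (((2 : ℝ) ^ K)⁻¹ * ∑ i, Y i m)) := by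
    rw [mul_mul_mul_comm, Finset.sum_mul_sum, ← pow_two]
    congr 1
    exact Finset.sum_congr rfl fun l _ => Finset.sum_congr rfl fun m _ => by ring
  -- key pointwise identity
  have main : ∀ l m : Fin (2 ^ K),
      ((Fintype.card (Equiv.Perm (Fin (2 ^ K))) : ℝ)⁻¹
          * ∑ π : Equiv.Perm (Fin (2 ^ K)), Y (π.symm l) l * Y (π.symm m) m)
        - (((2 : ℝ) ^ K)⁻¹ * ∑ i, Y i l) * (((2 : ℝ) ^ K)⁻¹ * ∑ i, Y i m)
      = (if l = m then ((2 : ℝ) ^ K - 1)⁻¹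
            * ∑ i, (Y i l - ((2 : ℝ) ^ K)⁻¹ * ∑ i', Y i' l) ^ 2 else 0)
        - ((2 : ℝ) ^ K * ((2 : ℝ) ^ K - 1))⁻¹
            * ∑ i, (Y i l - ((2 : ℝ) ^ K)⁻¹ * ∑ i', Y i' l)
                * (Y i m - ((2 : ℝ) ^ K)⁻¹ * ∑ i', Y i' m) := by
    intro l m
    by_cases hlm : l = m
    · subst hlm
      rw [if_pos rfl, hdiag l]
      have hexp2 : ∑ i, (Y i l - ((2 : ℝ) ^ K)⁻¹ * ∑ i', Y i' l) ^ 2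
          = (∑ i, Y i l * Y i l)
            - ((2 : ℝ) ^ K)⁻¹ * ((∑ i, Y i l) * (∑ i, Y i l)) := by
        simp only [pow_two]
        exact hexp l l
      rw [hexp2, hexp l l]
      field_simp
    · rw [if_neg hlm, hoff l m hlm, hoffsum l m, hexp l m]
      field_simp
      ring
  -- assemble
  rw [hsecond, hmeanEq a, hmeanEq b, hmp, hc2, hS, hTsum]
  exact final_combine _ _ _ _ _ _
    (fun l m => by linear_combination (Hmat K l a * Hmat K m b) * main l m)
end

section
/- The matched-pair covariance estimator Ĉov(τ̂_M) = (r(r−1))^{-1} Σ_{j=1}^r (τ̂_{j·} − τ̂_M)(τ̂_{j·} − τ̂_M)' has bias E[Ĉov(τ̂_M)] − Cov(τ̂_M) = (r(r−1))^{-1} Σ_{j=1}^r (τ_{j·} − τ)(τ_{j·} − τ)'. -/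
/-!
Write `Xⱼ, Yⱼ` for entries `a, b` of `τ̂ⱼ.` and `Cⱼ = Cov(Xⱼ, Yⱼ)`. Pointwise,
`∑ⱼ (Xⱼ - X̄)(Yⱼ - Ȳ) = ∑ⱼ XⱼYⱼ - r X̄ Ȳ`, and independence kills every cross covariance
`Cov(Xⱼ, Yₖ)`, `j ≠ k`. Taking expectations, the sum has mean
`(1 - 1/r) ∑ⱼ Cⱼ + ∑ⱼ (τⱼ. - τ)(τⱼ. - τ)'` while `Cov(X̄, Ȳ) = r⁻² ∑ⱼ Cⱼ`; after dividing by
`r (r - 1)` the covariance terms cancel exactly, leaving the spread of the pair means.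
-/

open Finset MeasureTheory ProbabilityTheory

theorem sum_sub_mean_mul_sub_mean {ι : Type*} [Fintype ι] (A B : ι → ℝ) :
    ∑ j, (A j - (Fintype.card ι : ℝ)⁻¹ * ∑ k, A k) * (B j - (Fintype.card ι : ℝ)⁻¹ * ∑ k, B k)
      = ∑ j, A j * B j - (Fintype.card ι : ℝ)⁻¹ * ((∑ j, A j) * ∑ j, B j) := by
  set n : ℝ := (Fintype.card ι : ℝ)
  have hn : n * n⁻¹ * n⁻¹ = n⁻¹ := by
    rcases eq_or_ne n 0 with h | h
    · simp [h]
    · rw [mul_inv_cancel₀ h, one_mul]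
  simp only [sub_mul, mul_sub, sum_sub_distrib, ← mul_sum, ← sum_mul, sum_const, card_univ,
    nsmul_eq_mul]
  linear_combination ((∑ j, A j) * ∑ j, B j) * hn

section Uncorrelated

variable {Ω ι : Type*} [MeasurableSpace Ω] {P : Measure Ω} [IsProbabilityMeasure P]
  {X Y : Ω → ℝ}

theorem integral_mul_eq_covariance_add (hX : MemLp X 2 P) (hY : MemLp Y 2 P) :
    ∫ ω, X ω * Y ω ∂P = cov[X, Y; P] + P[X] * P[Y] := by
  rw [covariance_eq_sub hX hY, sub_add_cancel]
  rfl

variable [Fintype ι] {X Y : ι → Ω → ℝ}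

theorem covariance_fun_sum_fun_sum_of_pairwise (hX : ∀ i, MemLp (X i) 2 P)
    (hY : ∀ i, MemLp (Y i) 2 P) (huncor : Pairwise fun i j => cov[X i, Y j; P] = 0) :
    cov[fun ω => ∑ i, X i ω, fun ω => ∑ i, Y i ω; P] = ∑ i, cov[X i, Y i; P] := by
  rw [covariance_fun_sum_fun_sum hX hY]
  exact sum_congr rfl fun i _ => sum_eq_single i (fun j _ hji => huncor hji.symm) (by simp)

theorem integral_sum_sub_mean_mul_sub_mean (hX : ∀ i, MemLp (X i) 2 P)
    (hY : ∀ i, MemLp (Y i) 2 P) (huncor : Pairwise fun i j => cov[X i, Y j; P] = 0) :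
    ∫ ω, ∑ j, (X j ω - (Fintype.card ι : ℝ)⁻¹ * ∑ k, X k ω) *
        (Y j ω - (Fintype.card ι : ℝ)⁻¹ * ∑ k, Y k ω) ∂P
      = (1 - (Fintype.card ι : ℝ)⁻¹) * ∑ j, cov[X j, Y j; P]
        + ∑ j, (P[X j] - (Fintype.card ι : ℝ)⁻¹ * ∑ k, P[X k]) *
            (P[Y j] - (Fintype.card ι : ℝ)⁻¹ * ∑ k, P[Y k]) := by
  have hsumX : MemLp (fun ω => ∑ i, X i ω) 2 P := memLp_finsetSum _ fun i _ => hX i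
  have hsumY : MemLp (fun ω => ∑ i, Y i ω) 2 P := memLp_finsetSum _ fun i _ => hY i
  have hdiag : ∀ j, Integrable (fun ω => X j ω * Y j ω) P :=
    fun j => (hX j).integrable_mul (hY j)
  have hprod : Integrable (fun ω => (∑ i, X i ω) * ∑ i, Y i ω) P := hsumX.integrable_mul hsumY
  simp only [sum_sub_mean_mul_sub_mean]
  rw [integral_sub (integrable_finsetSum _ fun j _ => hdiag j) (hprod.const_mul _),
    integral_finsetSum _ fun j _ => hdiag j, integral_const_mul,
    integral_mul_eq_covariance_add hsumX hsumY,
    covariance_fun_sum_fun_sum_of_pairwise hX hY huncor,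
    integral_finsetSum _ fun j _ => (hX j).integrable one_le_two,
    integral_finsetSum _ fun j _ => (hY j).integrable one_le_two]
  simp only [integral_mul_eq_covariance_add (hX _) (hY _), sum_add_distrib]
  ring

theorem integral_mean_sub_mul_mean_sub (hX : ∀ i, MemLp (X i) 2 P)
    (hY : ∀ i, MemLp (Y i) 2 P) (huncor : Pairwise fun i j => cov[X i, Y j; P] = 0) :
    ∫ ω, ((Fintype.card ι : ℝ)⁻¹ * ∑ j, X j ω - (Fintype.card ι : ℝ)⁻¹ * ∑ j, P[X j]) *
        ((Fintype.card ι : ℝ)⁻¹ * ∑ j, Y j ω - (Fintype.card ι : ℝ)⁻¹ * ∑ j, P[Y j]) ∂P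
      = (Fintype.card ι : ℝ)⁻¹ * (Fintype.card ι : ℝ)⁻¹ * ∑ j, cov[X j, Y j; P] := by
  set n : ℝ := (Fintype.card ι : ℝ)
  have hmean : ∀ Z : ι → Ω → ℝ, (∀ i, MemLp (Z i) 2 P) →
      P[fun ω => n⁻¹ * ∑ j, Z j ω] = n⁻¹ * ∑ j, P[Z j] := fun Z hZ => by
    rw [integral_const_mul, integral_finsetSum _ fun j _ => (hZ j).integrable one_le_two]
  calc _ = cov[fun ω => n⁻¹ * ∑ j, X j ω, fun ω => n⁻¹ * ∑ j, Y j ω; P] := by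
        rw [covariance, hmean X hX, hmean Y hY]
    _ = _ := by
      rw [covariance_const_mul_left, covariance_const_mul_right,
        covariance_fun_sum_fun_sum_of_pairwise hX hY huncor, mul_assoc]

end Uncorrelated

theorem covariance_comp_eval_eq_zero {ι : Type*} [Fintype ι] {Ω : ι → Type*}
    [∀ i, MeasurableSpace (Ω i)] {μ : ∀ i, Measure (Ω i)} [∀ i, IsProbabilityMeasure (μ i)]
    {X Y : ∀ i, Ω i → ℝ} (hX : ∀ i, MemLp (X i) 2 (μ i)) (hY : ∀ i, MemLp (Y i) 2 (μ i))
    {i j : ι} (hij : i ≠ j) :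
    cov[fun ω => X i (ω i), fun ω => Y j (ω j); Measure.pi μ] = 0 := by
  have hindep := (iIndepFun_pi (X := fun i x => (X i x, Y i x)) fun i =>
    ((hX i).aestronglyMeasurable.aemeasurable.prodMk
      (hY i).aestronglyMeasurable.aemeasurable)).indepFun hij
  exact (hindep.comp measurable_fst measurable_snd).covariance_eq_zero
    ((hX i).comp_measurePreserving (measurePreserving_eval μ i))
    ((hY j).comp_measurePreserving (measurePreserving_eval μ j))

/-- Entry `(a, b)`: `τ̂ⱼ. = f j (ω j)` on the product space `∏ⱼ Ω j`, which makes them independent. -/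
theorem covariance_estimator_bias (K r : ℕ) (hr : 2 ≤ r)
    (Ω : Fin r → Type) [∀ j, MeasurableSpace (Ω j)]
    (μ : ∀ j, Measure (Ω j)) [∀ j, IsProbabilityMeasure (μ j)]
    (f : ∀ j, Ω j → Fin (2 ^ K) → ℝ)
    (hmeas : ∀ j a, Measurable fun ω => f j ω a)
    (hint : ∀ j a b, Integrable (fun ω => f j ω a * f j ω b) (μ j))
    (τJ : Fin r → Fin (2 ^ K) → ℝ)
    (hmean : ∀ j a, ∫ ω, f j ω a ∂(μ j) = τJ j a) :
    ∀ a b : Fin (2 ^ K),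
      (∫ ω, ((r : ℝ) * ((r : ℝ) - 1))⁻¹ *
          ∑ j, (f j (ω j) a - (r : ℝ)⁻¹ * ∑ k, f k (ω k) a) *
               (f j (ω j) b - (r : ℝ)⁻¹ * ∑ k, f k (ω k) b) ∂(Measure.pi μ))
        - (∫ ω, (((r : ℝ)⁻¹ * ∑ j, f j (ω j) a) - (r : ℝ)⁻¹ * ∑ j, τJ j a) *
                (((r : ℝ)⁻¹ * ∑ j, f j (ω j) b) - (r : ℝ)⁻¹ * ∑ j, τJ j b)
            ∂(Measure.pi μ))
      = ((r : ℝ) * ((r : ℝ) - 1))⁻¹ *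
          ∑ j, (τJ j a - (r : ℝ)⁻¹ * ∑ k, τJ k a) * (τJ j b - (r : ℝ)⁻¹ * ∑ k, τJ k b) := by
  intro a b
  have hr₀ : (r : ℝ) ≠ 0 := by norm_cast; omega
  have hr₁ : (r : ℝ) - 1 ≠ 0 := sub_ne_zero.2 (by norm_cast; omega)
  have hL2 : ∀ j c, MemLp (fun x => f j x c) 2 (μ j) := fun j c =>
    (memLp_two_iff_integrable_sq (hmeas j c).aestronglyMeasurable).2
      (by simpa only [sq] using hint j c c)
  have hX : ∀ c j, MemLp (fun ω : ∀ i, Ω i => f j (ω j) c) 2 (Measure.pi μ) := fun c j =>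
    (hL2 j c).comp_measurePreserving (measurePreserving_eval μ j)
  have huncor : Pairwise fun i j =>
      cov[fun ω => f i (ω i) a, fun ω => f j (ω j) b; Measure.pi μ] = 0 := fun i j hij =>
    covariance_comp_eval_eq_zero (fun i => hL2 i a) (fun i => hL2 i b) hij
  have hτ : ∀ j c, τJ j c = ∫ ω, f j (ω j) c ∂Measure.pi μ := fun j c => by
    rw [integral_comp_eval (hL2 j c).aestronglyMeasurable, hmean]
  have hsample := integral_sum_sub_mean_mul_sub_mean (hX a) (hX b) huncor
  have hmeans := integral_mean_sub_mul_mean_sub (hX a) (hX b) huncor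
  simp only [Fintype.card_fin] at hsample hmeans
  simp only [hτ]
  rw [integral_const_mul, hsample, hmeans]
  field_simp
  ring
end
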